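/- arXiv:2205.00989 — 6 statements merged into one kernel-verified Lean document; each statement's English description precedes it below -/
import Mathlib

section
/- Let τ' and τ be two topologies on a set A such that: (1) both (A,τ') and (A,τ) are sequential topological spaces, (2) τ is finer than τ' (i.e., τ' ⊆ τ), (3) every subset of A that is relatively compact for τ' is relatively compact for τ, and (4) (A,τ') is Hausdorff. Then τ = τ'. -/
/-!
Since `τ'` is sequential it suffices that every `τ'`-convergent sequence `u n → p` also converges
for `τ`. The set `{p} ∪ range u` is `τ'`-compact, hence `τ'`-closed, so its `τ`-closure `K` is
`τ`-compact. Any `τ`-cluster point of `u` is a `τ'`-cluster point as well, hence equals `p` by the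
Hausdorff property; a sequence in a compact set with a unique cluster point converges to it.
-/

open Filter Set Topology

theorem tendsto_nhds_of_le_of_isCompact {X Y : Type*} {t t' : TopologicalSpace X}
    [@T2Space X t'] (hle : t ≤ t') {l : Filter Y} {f : Y → X} {p : X} {K : Set X}
    (hK : @IsCompact X t K) (hfK : ∀ᶠ y in l, f y ∈ K) (hf : Tendsto f l (@nhds X t' p)) :
    Tendsto f l (@nhds X t p) := by
  refine @IsCompact.tendsto_nhds_of_unique_mapClusterPt X t K Y l p f hK hfK fun x _ hx => ?_
  have hx' : NeBot (@nhds X t' x ⊓ @nhds X t' p) :=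
    (@ClusterPt.neBot X t _ _ hx).mono (inf_le_inf (@nhds_mono X t t' _ hle) hf)
  exact @eq_of_nhds_neBot X t' _ _ _ hx'

theorem stmt0_general {A : Type*} (τ' τ : TopologicalSpace A)
    (hseq' : @SequentialSpace A τ')
    (hfiner : τ ≤ τ')
    (hcomp : ∀ M : Set A, @IsCompact A τ' (@closure A τ' M) →
      @IsCompact A τ (@closure A τ M))
    (hT2 : @T2Space A τ') :
    τ = τ' := by
  refine le_antisymm hfiner ?_
  rw [← continuous_id_iff_le]
  refine @SeqContinuous.continuous A A τ' τ hseq' id fun u p hup => ?_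
  have hM : @IsCompact A τ' (insert p (range u)) :=
    @Tendsto.isCompact_insert_range A τ' u p hup
  have hK : @IsCompact A τ (closure[τ] (insert p (range u))) :=
    hcomp _ (by rwa [@IsClosed.closure_eq A τ' _ (@IsCompact.isClosed A τ' hT2 _ hM)])
  exact tendsto_nhds_of_le_of_isCompact hfiner hK
    (.of_forall fun n => subset_closure (mem_insert_of_mem _ (mem_range_self n))) hup

/-- Comparable sequential topologies with matching relatively compact sets,
the coarser one Hausdorff, must agree. -/
theorem stmt0 {A : Type*} (τ' τ : TopologicalSpace A)
    (hseq' : @SequentialSpace A τ') (hseq : @SequentialSpace A τ)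
    (hfiner : τ ≤ τ')
    (hcomp : ∀ M : Set A, @IsCompact A τ' (@closure A τ' M) →
      @IsCompact A τ (@closure A τ M))
    (hT2 : @T2Space A τ') :
    τ = τ' :=
  stmt0_general τ' τ hseq' hfiner hcomp hT2
end

section
/- Let τ' and τ be two topologies on a set A with τ' ⊆ τ, such that (A,τ') is Hausdorff, every τ'-relatively compact set is τ-relatively compact, and both spaces are sequential. Then any sequence in A that converges to y in (A,τ') also converges to y in (A,τ). -/
/-!
The set `M = {y} ∪ range u` is `τ'`-compact, hence `τ'`-closed, so its `τ`-closure `K` is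
`τ`-compact. For a `τ`-open `U ∋ y`, the set `K \ U` is `τ`-compact, hence `τ'`-compact and
`τ'`-closed; since it misses `y`, the sequence eventually avoids it while never leaving `K`,
i.e. it eventually lies in `U`.
-/

open Filter Set

theorem isCompact_of_le_topology {X : Type*} {τ τ' : TopologicalSpace X} (hle : τ ≤ τ')
    {K : Set X} (hK : @IsCompact X τ K) : @IsCompact X τ' K := by
  simpa using @IsCompact.image X X τ τ' K id hK (continuous_id_of_le hle)

theorem tendsto_nhds_of_le_of_eventually_mem_isCompact {X α : Type*} {τ τ' : TopologicalSpace X}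
    (hle : τ ≤ τ') (hT2 : @T2Space X τ') {K : Set X} (hK : @IsCompact X τ K) {l : Filter α}
    {f : α → X} {y : X} (hfK : ∀ᶠ a in l, f a ∈ K) (hf : Tendsto f l (@nhds X τ' y)) :
    Tendsto f l (@nhds X τ y) := by
  rw [@tendsto_nhds X τ]
  intro U hU hyU
  have hKU : @IsCompact X τ' (K \ U) :=
    isCompact_of_le_topology hle (@IsCompact.diff X τ _ _ hK hU)
  have hKUc : (K \ U)ᶜ ∈ @nhds X τ' y :=
    (@IsCompact.isClosed X τ' hT2 _ hKU).isOpen_compl.mem_nhds fun h => h.2 hyU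
  filter_upwards [hfK, hf hKUc] with a haK haKU
  by_contra haU
  exact haKU ⟨haK, haU⟩

theorem stmt1_general {A : Type*} (τ' τ : TopologicalSpace A)
    (hfiner : τ ≤ τ')
    (hcomp : ∀ M : Set A, @IsCompact A τ' (@closure A τ' M) →
      @IsCompact A τ (@closure A τ M))
    (hT2 : @T2Space A τ')
    (u : ℕ → A) (y : A)
    (hconv : Filter.Tendsto u Filter.atTop (@nhds A τ' y)) :
    Filter.Tendsto u Filter.atTop (@nhds A τ y) := by
  set M := insert y (range u)
  have hM : @IsCompact A τ' M := @Tendsto.isCompact_insert_range A τ' u y hconv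
  have hMclosure : @IsCompact A τ (@closure A τ M) :=
    hcomp M (by rwa [@IsClosed.closure_eq A τ' M (@IsCompact.isClosed A τ' hT2 _ hM)])
  have hu : ∀ᶠ n in atTop, u n ∈ @closure A τ M :=
    Eventually.of_forall fun n => @subset_closure A τ M _ (mem_insert_of_mem y (mem_range_self n))
  exact tendsto_nhds_of_le_of_eventually_mem_isCompact hfiner hT2 hMclosure hu hconv

/-- If τ' ⊆ τ, (A,τ') Hausdorff, τ'-relatively compact sets are τ-relatively
compact, and both topologies sequential, then τ'-convergent sequences are
τ-convergent (to the same limit). -/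
theorem stmt1 {A : Type*} (τ' τ : TopologicalSpace A)
    (hseq' : @SequentialSpace A τ') (hseq : @SequentialSpace A τ)
    (hfiner : τ ≤ τ')
    (hcomp : ∀ M : Set A, @IsCompact A τ' (@closure A τ' M) →
      @IsCompact A τ (@closure A τ M))
    (hT2 : @T2Space A τ')
    (u : ℕ → A) (y : A)
    (hconv : Filter.Tendsto u Filter.atTop (@nhds A τ' y)) :
    Filter.Tendsto u Filter.atTop (@nhds A τ y) :=
  stmt1_general τ' τ hfiner hcomp hT2 u y hconv
end

section
/- Let Y₁, Y₂, Y₃ be bounded real-valued random variables on a probability space forming a martingale with respect to a filtration (𝒢₁ ⊆ 𝒢₂ ⊆ 𝒢₃), i.e., Yᵢ is 𝒢ᵢ-measurable and E[Y_{i+1} | 𝒢ᵢ] = Yᵢ for i = 1,2. If Y₁ and Y₃ have the same distribution, then Y₁ = Y₂ = Y₃ almost surely. -/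
/-!
Conditional expectation is an orthogonal projection in `L²`, so for a square-integrable
martingale step `f = E[g | m]` one has `E[(g - f)²] = E[g²] - E[f²]`. Summing over the two
steps, `E[(Y₂ - Y₁)²] + E[(Y₃ - Y₂)²] = E[Y₃²] - E[Y₁²]`, which vanishes because `Y₁` and `Y₃`
have the same law. Both nonnegative terms are therefore zero.
-/

open MeasureTheory

section MartingaleStep

variable {Ω : Type*} {m m' mΩ : MeasurableSpace Ω} {P : Measure Ω} {f g : Ω → ℝ}

theorem integral_mul_eq_integral_sq_of_condExp_eq [IsFiniteMeasure P] (hm : m ≤ mΩ)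
    (hf : StronglyMeasurable[m] f) (hg : Integrable g P) (hfg : Integrable (f * g) P)
    (hcond : P[g|m] =ᵐ[P] f) :
    ∫ ω, f ω * g ω ∂P = ∫ ω, f ω ^ 2 ∂P := by
  have hpull : P[f * g|m] =ᵐ[P] fun ω => f ω ^ 2 := by
    filter_upwards [condExp_mul_of_stronglyMeasurable_left hf hfg hg, hcond] with ω h hω
    rw [h, Pi.mul_apply, hω, sq]
  calc ∫ ω, f ω * g ω ∂P = ∫ ω, (P[f * g|m]) ω ∂P := (integral_condExp hm).symm
    _ = ∫ ω, f ω ^ 2 ∂P := integral_congr_ae hpull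

theorem integral_sub_sq_of_condExp_eq [IsFiniteMeasure P] (hm : m ≤ mΩ)
    (hf : StronglyMeasurable[m] f) (hf2 : MemLp f 2 P) (hg2 : MemLp g 2 P)
    (hcond : P[g|m] =ᵐ[P] f) :
    ∫ ω, (g ω - f ω) ^ 2 ∂P = ∫ ω, g ω ^ 2 ∂P - ∫ ω, f ω ^ 2 ∂P := by
  have hfg : Integrable (fun ω => f ω * g ω) P := hf2.integrable_mul hg2
  have hcross := integral_mul_eq_integral_sq_of_condExp_eq hm hf
    (hg2.integrable one_le_two) hfg hcond
  have hexpand :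
      (fun ω => (g ω - f ω) ^ 2) = fun ω => g ω ^ 2 - 2 * (f ω * g ω) + f ω ^ 2 := by
    ext ω; ring
  have hint : Integrable (fun ω => g ω ^ 2 - 2 * (f ω * g ω)) P :=
    hg2.integrable_sq.sub (hfg.const_mul 2)
  rw [hexpand, integral_add hint hf2.integrable_sq,
    integral_sub hg2.integrable_sq (hfg.const_mul 2), integral_const_mul, hcross]
  ring

theorem ae_eq_of_integral_sub_sq_eq_zero (hf2 : MemLp f 2 P) (hg2 : MemLp g 2 P)
    (h : ∫ ω, (g ω - f ω) ^ 2 ∂P = 0) : f =ᵐ[P] g := by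
  have hsq : (fun ω => (g ω - f ω) ^ 2) =ᵐ[P] 0 :=
    (integral_eq_zero_iff_of_nonneg (fun _ => sq_nonneg _) (hg2.sub hf2).integrable_sq).mp h
  filter_upwards [hsq] with ω hω
  exact (sub_eq_zero.mp (pow_eq_zero_iff two_ne_zero |>.mp hω)).symm

theorem ae_eq_of_condExp_eq_of_map_eq [IsFiniteMeasure P]
    {Y₁ Y₂ Y₃ : Ω → ℝ} (hm : m ≤ mΩ) (hm' : m' ≤ mΩ)
    (hY₁ : StronglyMeasurable[m] Y₁) (hY₂ : StronglyMeasurable[m'] Y₂) (hY₃ : AEMeasurable Y₃ P)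
    (hL₁ : MemLp Y₁ 2 P) (hcond₁ : P[Y₂|m] =ᵐ[P] Y₁) (hcond₂ : P[Y₃|m'] =ᵐ[P] Y₂)
    (hlaw : P.map Y₁ = P.map Y₃) : Y₁ =ᵐ[P] Y₂ ∧ Y₂ =ᵐ[P] Y₃ := by
  have hident : ProbabilityTheory.IdentDistrib Y₁ Y₃ P P :=
    ⟨(hY₁.mono hm).measurable.aemeasurable, hY₃, hlaw⟩
  have hL₃ : MemLp Y₃ 2 P := hident.memLp_iff.mp hL₁
  have hL₂ : MemLp Y₂ 2 P := (hL₃.condExp one_le_two).ae_eq hcond₂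
  have hstep₁ := integral_sub_sq_of_condExp_eq hm hY₁ hL₁ hL₂ hcond₁
  have hstep₂ := integral_sub_sq_of_condExp_eq hm' hY₂ hL₂ hL₃ hcond₂
  have hsq : ∫ ω, Y₁ ω ^ 2 ∂P = ∫ ω, Y₃ ω ^ 2 ∂P := hident.sq.integral_eq
  have hnonneg₁ : 0 ≤ ∫ ω, (Y₂ ω - Y₁ ω) ^ 2 ∂P := integral_nonneg fun _ => sq_nonneg _
  have hnonneg₂ : 0 ≤ ∫ ω, (Y₃ ω - Y₂ ω) ^ 2 ∂P := integral_nonneg fun _ => sq_nonneg _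
  exact ⟨ae_eq_of_integral_sub_sq_eq_zero hL₁ hL₂ (by linarith),
    ae_eq_of_integral_sub_sq_eq_zero hL₂ hL₃ (by linarith)⟩

end MartingaleStep

theorem stmt2_general {Ω : Type*} [mΩ : MeasurableSpace Ω] (P : Measure Ω)
    [IsProbabilityMeasure P]
    (G1 G2 G3 : MeasurableSpace Ω) (h12 : G1 ≤ G2) (h23 : G2 ≤ G3) (h3 : G3 ≤ mΩ)
    (Y1 Y2 Y3 : Ω → ℝ) (C : ℝ)
    (hb1 : ∀ ω, |Y1 ω| ≤ C)
    (hm1 : Measurable[G1] Y1) (hm2 : Measurable[G2] Y2) (hm3 : Measurable[G3] Y3)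
    (hmart1 : P[Y2|G1] =ᵐ[P] Y1) (hmart2 : P[Y3|G2] =ᵐ[P] Y2)
    (hdist : @Measure.map Ω ℝ mΩ _ Y1 P = @Measure.map Ω ℝ mΩ _ Y3 P) :
    Y1 =ᵐ[P] Y2 ∧ Y2 =ᵐ[P] Y3 := by
  have hG2 : G2 ≤ mΩ := h23.trans h3
  have hG1 : G1 ≤ mΩ := h12.trans hG2
  have hY3 : Measurable[mΩ] Y3 := hm3.mono h3 le_rfl
  have hL1 : MemLp Y1 2 P :=
    .of_bound (hm1.mono hG1 le_rfl).aestronglyMeasurable C (ae_of_all _ hb1)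
  exact ae_eq_of_condExp_eq_of_map_eq hG1 hG2 hm1.stronglyMeasurable hm2.stronglyMeasurable
    hY3.aemeasurable hL1 hmart1 hmart2 hdist

/-- A bounded three-step real martingale whose first and last terms have the
same distribution is a.s. constant. -/
theorem stmt2 {Ω : Type*} [mΩ : MeasurableSpace Ω] (P : Measure Ω)
    [IsProbabilityMeasure P]
    (G1 G2 G3 : MeasurableSpace Ω) (h12 : G1 ≤ G2) (h23 : G2 ≤ G3) (h3 : G3 ≤ mΩ)
    (Y1 Y2 Y3 : Ω → ℝ) (C : ℝ)
    (hb1 : ∀ ω, |Y1 ω| ≤ C) (hb2 : ∀ ω, |Y2 ω| ≤ C) (hb3 : ∀ ω, |Y3 ω| ≤ C)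
    (hm1 : Measurable[G1] Y1) (hm2 : Measurable[G2] Y2) (hm3 : Measurable[G3] Y3)
    (hmart1 : P[Y2|G1] =ᵐ[P] Y1) (hmart2 : P[Y3|G2] =ᵐ[P] Y2)
    (hdist : @Measure.map Ω ℝ mΩ _ Y1 P = @Measure.map Ω ℝ mΩ _ Y3 P) :
    Y1 =ᵐ[P] Y2 ∧ Y2 =ᵐ[P] Y3 :=
  stmt2_general (mΩ := mΩ) P G1 G2 G3 h12 h23 h3 Y1 Y2 Y3 C hb1 hm1 hm2 hm3 hmart1 hmart2 hdist
end

section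
/- Let X₁, X₂, X₃ be measure-valued martingales with values in P(𝒳) for a Polish space 𝒳, with respect to a common filtration, meaning that for every bounded continuous f : 𝒳 → ℝ, the real-valued process (X₁(f), X₂(f), X₃(f)) is a bounded martingale. If X₁ and X₃ have the same law (as P(𝒳)-valued random variables), then X₁ = X₂ = X₃ almost surely. -/
open MeasureTheory BoundedContinuousFunction ProbabilityTheory TopologicalSpace

open scoped NNReal

/-! For a bounded continuous `f`, the real processes `Yᵢ = ∫ f dXᵢ` form a bounded martingale, and
`Y₁`, `Y₃` have the same second moment because `X₁` and `X₃` have the same law. Orthogonality of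
martingale increments gives `E[(Y₃ - Y₁)²] = E[Y₃²] - E[Y₁²] = 0`, so `Y₁ = Y₂ = Y₃` a.s.
Countably many bounded continuous functions already separate probability measures on a
second-countable space (integrals of the outer approximations of the closed sets of a countable
generating π-system), so the a.s. equalities for these `f` combine into `X₁ = X₂ = X₃` a.s. -/

section SquareIntegrableMartingale

variable {Ω : Type*} {m₁ m₂ mΩ : MeasurableSpace Ω} {μ : Measure Ω} [IsFiniteMeasure μ]

theorem integral_mul_eq_integral_sq_of_condExp_eq_s5 (hm : m₁ ≤ mΩ) {Y Z : Ω → ℝ}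
    (hY : StronglyMeasurable[m₁] Y) (hYL2 : MemLp Y 2 μ) (hZL2 : MemLp Z 2 μ)
    (hZY : μ[Z|m₁] =ᵐ[μ] Y) :
    ∫ ω, Y ω * Z ω ∂μ = ∫ ω, Y ω ^ 2 ∂μ :=
  calc ∫ ω, Y ω * Z ω ∂μ = ∫ ω, μ[Y * Z|m₁] ω ∂μ := (integral_condExp hm).symm
    _ = ∫ ω, Y ω * Y ω ∂μ := by
      refine integral_congr_ae ?_
      filter_upwards [condExp_mul_of_stronglyMeasurable_left hY (hYL2.integrable_mul hZL2)
        (hZL2.integrable one_le_two), hZY] with ω hpull hω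
      rw [hpull, Pi.mul_apply, hω]
    _ = ∫ ω, Y ω ^ 2 ∂μ := by simp only [sq]

theorem ae_eq_of_condExp_eq_of_integral_sq_eq (hm : m₁ ≤ mΩ) {Y Z : Ω → ℝ}
    (hY : StronglyMeasurable[m₁] Y) (hYL2 : MemLp Y 2 μ) (hZL2 : MemLp Z 2 μ)
    (hZY : μ[Z|m₁] =ᵐ[μ] Y) (hsq : ∫ ω, Y ω ^ 2 ∂μ = ∫ ω, Z ω ^ 2 ∂μ) :
    Z =ᵐ[μ] Y := by
  have hcross := integral_mul_eq_integral_sq_of_condExp_eq_s5 hm hY hYL2 hZL2 hZY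
  have hYZ : Integrable (fun ω => 2 * (Y ω * Z ω)) μ := (hYL2.integrable_mul hZL2).const_mul 2
  have hdiff : ∫ ω, (Z ω - Y ω) ^ 2 ∂μ = 0 := by
    have hexpand : (fun ω => (Z ω - Y ω) ^ 2) =
        fun ω => Z ω ^ 2 - 2 * (Y ω * Z ω) + Y ω ^ 2 := by
      funext ω; ring
    rw [hexpand, integral_add (f := fun ω => Z ω ^ 2 - 2 * (Y ω * Z ω))
      (hZL2.integrable_sq.sub hYZ) hYL2.integrable_sq, integral_sub hZL2.integrable_sq hYZ,
      integral_const_mul, hcross, hsq]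
    ring
  have hsq_zero := (integral_eq_zero_iff_of_nonneg (fun ω => sq_nonneg (Z ω - Y ω))
    (hZL2.sub hYL2).integrable_sq).mp hdiff
  filter_upwards [hsq_zero] with ω hω
  exact sub_eq_zero.mp (pow_eq_zero_iff two_ne_zero |>.mp hω)

theorem ae_eq_of_condExp_chain_of_integral_sq_eq (h₁₂ : m₁ ≤ m₂) (h₂ : m₂ ≤ mΩ)
    {Y₁ Y₂ Y₃ : Ω → ℝ} (hY₁ : StronglyMeasurable[m₁] Y₁) (hY₁L2 : MemLp Y₁ 2 μ)
    (hY₃L2 : MemLp Y₃ 2 μ) (h₂₁ : μ[Y₂|m₁] =ᵐ[μ] Y₁) (h₃₂ : μ[Y₃|m₂] =ᵐ[μ] Y₂)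
    (hsq : ∫ ω, Y₁ ω ^ 2 ∂μ = ∫ ω, Y₃ ω ^ 2 ∂μ) :
    Y₁ =ᵐ[μ] Y₂ ∧ Y₂ =ᵐ[μ] Y₃ := by
  have h₃₁ : Y₃ =ᵐ[μ] Y₁ := ae_eq_of_condExp_eq_of_integral_sq_eq (h₁₂.trans h₂) hY₁ hY₁L2 hY₃L2
    ((condExp_condExp_of_le h₁₂ h₂).symm.trans ((condExp_congr_ae h₃₂).trans h₂₁)) hsq
  have h₂₁' : Y₂ =ᵐ[μ] Y₁ := by
    refine h₃₂.symm.trans ((condExp_congr_ae h₃₁).trans ?_)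
    rw [condExp_of_stronglyMeasurable h₂ (hY₁.mono h₁₂) (hY₁L2.integrable one_le_two)]
  exact ⟨h₂₁'.symm, h₂₁'.trans h₃₁.symm⟩

end SquareIntegrableMartingale

section SeparatingFamily

variable {X : Type*} [TopologicalSpace X] [MeasurableSpace X]

theorem exists_countable_isPiSystem_isClosed_generateFrom [BorelSpace X]
    [SecondCountableTopology X] :
    ∃ S : Set (Set X), S.Countable ∧ IsPiSystem S ∧ (∀ F ∈ S, IsClosed F) ∧
      Set.univ ∈ S ∧ ‹MeasurableSpace X› = MeasurableSpace.generateFrom S := by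
  let B := countableBasis X
  have : Countable B := (countable_countableBasis X).to_subtype
  let S : Set (Set X) := Set.range fun T : Finset B => ⋂ b ∈ T, (b : Set X)ᶜ
  have hS_closed : ∀ F ∈ S, IsClosed F := by
    rintro F ⟨T, rfl⟩
    exact isClosed_biInter fun b _ => (isOpen_of_mem_countableBasis b.2).isClosed_compl
  refine ⟨S, Set.countable_range _, ?_, hS_closed, ⟨∅, by simp⟩, ?_⟩
  · classical
    rintro _ ⟨T₁, rfl⟩ _ ⟨T₂, rfl⟩ _
    exact ⟨T₁ ∪ T₂, Finset.set_biInter_inter _ _ _⟩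
  refine le_antisymm ?_ (MeasurableSpace.generateFrom_le fun F hF => (hS_closed F hF).measurableSet)
  rw [BorelSpace.measurable_eq (α := X), borel_eq_generateFrom_of_subbasis
    (eq_generateFrom_countableBasis X)]
  refine MeasurableSpace.generateFrom_le fun b hb => ?_
  have hbS : bᶜ ∈ S := ⟨{⟨b, hb⟩}, by simp⟩
  simpa using (MeasurableSpace.measurableSet_generateFrom hbS).compl

theorem measure_eq_of_forall_integral_apprSeq_eq [OpensMeasurableSpace X] [HasOuterApproxClosed X]
    {μ ν : Measure X} [IsFiniteMeasure μ] [IsFiniteMeasure ν] {F : Set X} (hF : IsClosed F)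
    (h : ∀ n, ∫ x, (hF.apprSeq n x : ℝ) ∂μ = ∫ x, (hF.apprSeq n x : ℝ) ∂ν) :
    μ F = ν F := by
  have hlintegral : ∀ n, ∫⁻ x, hF.apprSeq n x ∂μ = ∫⁻ x, hF.apprSeq n x ∂ν := fun n =>
    (ENNReal.toReal_eq_toReal_iff' (lintegral_lt_top_of_nnreal μ _).ne
      (lintegral_lt_top_of_nnreal ν _).ne).mp <| by
        rw [toReal_lintegral_coe_eq_integral, toReal_lintegral_coe_eq_integral, h n]
  have hμ := HasOuterApproxClosed.tendsto_lintegral_apprSeq hF μ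
  simp_rw [hlintegral] at hμ
  exact tendsto_nhds_unique hμ (HasOuterApproxClosed.tendsto_lintegral_apprSeq hF ν)

theorem exists_countable_separating_integral [BorelSpace X] [SecondCountableTopology X]
    [HasOuterApproxClosed X] :
    ∃ 𝓕 : Set (X →ᵇ ℝ), 𝓕.Countable ∧ ∀ (μ ν : Measure X) [IsFiniteMeasure μ]
      [IsFiniteMeasure ν], (∀ f ∈ 𝓕, ∫ x, f x ∂μ = ∫ x, f x ∂ν) → μ = ν := by
  obtain ⟨S, hS_count, hS_pi, hS_closed, hS_univ, hS_gen⟩ :=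
    exists_countable_isPiSystem_isClosed_generateFrom (X := X)
  have : Countable S := hS_count.to_subtype
  let toReal : (X →ᵇ ℝ≥0) → X →ᵇ ℝ :=
    BoundedContinuousFunction.comp ((↑) : ℝ≥0 → ℝ) isometry_subtype_coe.lipschitz
  refine ⟨Set.range fun p : S × ℕ => toReal ((hS_closed _ p.1.2).apprSeq p.2),
    Set.countable_range _, fun μ ν _ _ h => ?_⟩
  have hS : ∀ F (hF : F ∈ S), μ F = ν F := fun F hF =>
    measure_eq_of_forall_integral_apprSeq_eq (hS_closed F hF) fun n => h _ ⟨(⟨F, hF⟩, n), rfl⟩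
  exact ext_of_generate_finite S hS_gen hS_pi hS (hS _ hS_univ)

theorem ProbabilityMeasure.ae_eq_of_forall_integral_ae_eq [BorelSpace X]
    [SecondCountableTopology X] [HasOuterApproxClosed X] {Ω : Type*} [MeasurableSpace Ω]
    {P : Measure Ω} {ξ η : Ω → ProbabilityMeasure X}
    (h : ∀ f : X →ᵇ ℝ, (fun ω => ∫ x, f x ∂(ξ ω : Measure X)) =ᵐ[P]
      fun ω => ∫ x, f x ∂(η ω : Measure X)) :
    ξ =ᵐ[P] η := by
  obtain ⟨𝓕, h𝓕_count, h𝓕⟩ := exists_countable_separating_integral (X := X)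
  filter_upwards [(ae_ball_iff h𝓕_count).mpr fun f _ => h f] with ω hω
  exact ProbabilityMeasure.toMeasure_injective (h𝓕 _ _ hω)

end SeparatingFamily

theorem stmt5_general {𝒳 : Type*} [TopologicalSpace 𝒳] [PolishSpace 𝒳]
    [MeasurableSpace 𝒳] [BorelSpace 𝒳]
    {Ω : Type*} [mΩ : MeasurableSpace Ω] (P : Measure Ω) [IsProbabilityMeasure P]
    (G1 G2 G3 : MeasurableSpace Ω) (h12 : G1 ≤ G2) (h23 : G2 ≤ G3) (h3 : G3 ≤ mΩ)
    (X1 X2 X3 : Ω → ProbabilityMeasure 𝒳)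
    (hm1 : @Measurable Ω (ProbabilityMeasure 𝒳) G1 (borel _) X1)
    (hm3 : @Measurable Ω (ProbabilityMeasure 𝒳) G3 (borel _) X3)
    (hmart1 : ∀ f : 𝒳 →ᵇ ℝ,
      P[(fun ω => ∫ x, f x ∂(X2 ω : Measure 𝒳))|G1]
        =ᵐ[P] fun ω => ∫ x, f x ∂(X1 ω : Measure 𝒳))
    (hmart2 : ∀ f : 𝒳 →ᵇ ℝ,
      P[(fun ω => ∫ x, f x ∂(X3 ω : Measure 𝒳))|G2]
        =ᵐ[P] fun ω => ∫ x, f x ∂(X2 ω : Measure 𝒳))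
    (hdist : @Measure.map Ω (ProbabilityMeasure 𝒳) mΩ (borel _) X1 P
      = @Measure.map Ω (ProbabilityMeasure 𝒳) mΩ (borel _) X3 P) :
    X1 =ᵐ[P] X2 ∧ X2 =ᵐ[P] X3 := by
  -- `G1 G2 G3` are local instances too; make instance search find the ambient `mΩ`.
  let : MeasurableSpace Ω := mΩ
  let : MeasurableSpace (ProbabilityMeasure 𝒳) := borel _
  have : BorelSpace (ProbabilityMeasure 𝒳) := ⟨rfl⟩
  have hX1 : AEMeasurable X1 P := (hm1.mono (h12.trans (h23.trans h3)) le_rfl).aemeasurable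
  have hX3 : AEMeasurable X3 P := (hm3.mono h3 le_rfl).aemeasurable
  have hlaw : IdentDistrib X1 X3 P P := ⟨hX1, hX3, hdist⟩
  have hreal : ∀ f : 𝒳 →ᵇ ℝ,
      (fun ω => ∫ x, f x ∂(X1 ω : Measure 𝒳)) =ᵐ[P] (fun ω => ∫ x, f x ∂(X2 ω : Measure 𝒳)) ∧
      (fun ω => ∫ x, f x ∂(X2 ω : Measure 𝒳)) =ᵐ[P] (fun ω => ∫ x, f x ∂(X3 ω : Measure 𝒳)) := by
    intro f
    have hφ := ProbabilityMeasure.continuous_integral_boundedContinuousFunction (X := 𝒳) f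
    have hmemLp : ∀ {Y : Ω → ProbabilityMeasure 𝒳}, AEMeasurable Y P →
        MemLp (fun ω => ∫ x, f x ∂(Y ω : Measure 𝒳)) 2 P := fun hY =>
      .of_bound (hφ.measurable.comp_aemeasurable hY).aestronglyMeasurable ‖f‖
        (.of_forall fun _ => f.norm_integral_le_norm _)
    exact ae_eq_of_condExp_chain_of_integral_sq_eq h12 (h23.trans h3)
      (hφ.measurable.comp hm1).stronglyMeasurable (hmemLp hX1) (hmemLp hX3) (hmart1 f) (hmart2 f)
      (hlaw.comp (hφ.measurable.pow_const 2)).integral_eq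
  exact ⟨ProbabilityMeasure.ae_eq_of_forall_integral_ae_eq fun f => (hreal f).1,
    ProbabilityMeasure.ae_eq_of_forall_integral_ae_eq fun f => (hreal f).2⟩

/-- Three measure-valued martingales (w.r.t. a common filtration) on a Polish
space such that the first and third have the same law agree almost surely. -/
theorem stmt5 {𝒳 : Type*} [TopologicalSpace 𝒳] [PolishSpace 𝒳]
    [MeasurableSpace 𝒳] [BorelSpace 𝒳]
    {Ω : Type*} [mΩ : MeasurableSpace Ω] (P : Measure Ω) [IsProbabilityMeasure P]
    (G1 G2 G3 : MeasurableSpace Ω) (h12 : G1 ≤ G2) (h23 : G2 ≤ G3) (h3 : G3 ≤ mΩ)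
    (X1 X2 X3 : Ω → ProbabilityMeasure 𝒳)
    (hm1 : @Measurable Ω (ProbabilityMeasure 𝒳) G1 (borel _) X1)
    (hm2 : @Measurable Ω (ProbabilityMeasure 𝒳) G2 (borel _) X2)
    (hm3 : @Measurable Ω (ProbabilityMeasure 𝒳) G3 (borel _) X3)
    (hmart1 : ∀ f : 𝒳 →ᵇ ℝ,
      P[(fun ω => ∫ x, f x ∂(X2 ω : Measure 𝒳))|G1]
        =ᵐ[P] fun ω => ∫ x, f x ∂(X1 ω : Measure 𝒳))
    (hmart2 : ∀ f : 𝒳 →ᵇ ℝ,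
      P[(fun ω => ∫ x, f x ∂(X3 ω : Measure 𝒳))|G2]
        =ᵐ[P] fun ω => ∫ x, f x ∂(X2 ω : Measure 𝒳))
    (hdist : @Measure.map Ω (ProbabilityMeasure 𝒳) mΩ (borel _) X1 P
      = @Measure.map Ω (ProbabilityMeasure 𝒳) mΩ (borel _) X3 P) :
    X1 =ᵐ[P] X2 ∧ X2 =ᵐ[P] X3 :=
  stmt5_general (mΩ := mΩ) P G1 G2 G3 h12 h23 h3 X1 X2 X3 hm1 hm3 hmart1 hmart2 hdist
end

section
/- Let (M, d) and (M, d') be two metrics on the same set M such that d' ≤ d pointwise, d and d' induce sequential topologies, and every d'-bounded-in-the-sense-of-relative-compactness set (i.e., every d'-relatively compact set) is d-relatively compact. Then d and d' induce the same topology on M. -/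
/-!
The identity `(M, d) → (M, d')` is `1`-Lipschitz, hence continuous. For the converse, since
`(M, d')` is sequential it suffices that `uₙ → b` in `d'` forces `uₙ → b` in `d`. The set
`{b} ∪ {uₙ}` is `d'`-compact and `d'`-closed, so its `d`-closure `K` is `d`-compact. Every
`d`-cluster point of `(uₙ)` in `K` is a `d'`-cluster point as well, hence equals `b`; a sequence
in a compact set with a single cluster point converges to it.
-/

open Filter Topology Set

theorem Filter.Tendsto.of_comp_of_isCompact {X Y ι : Type*} [TopologicalSpace X]
    [TopologicalSpace Y] [T2Space Y] {f : X → Y} (hf : Continuous f) (hinj : f.Injective)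
    {K : Set X} (hK : IsCompact K) {l : Filter ι} {u : ι → X} (huK : ∀ᶠ i in l, u i ∈ K)
    {a : X} (hu : Tendsto (f ∘ u) l (𝓝 (f a))) : Tendsto u l (𝓝 a) :=
  hK.tendsto_nhds_of_unique_mapClusterPt huK fun _ _ hx =>
    hinj <| eq_of_nhds_neBot <| (hx.continuousAt_comp hf.continuousAt).clusterPt.mono hu

theorem Equiv.continuous_symm_of_isCompact_closure {X Y : Type*} [TopologicalSpace X]
    [TopologicalSpace Y] [T2Space Y] [SequentialSpace Y] (e : X ≃ Y) (he : Continuous e)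
    (hcomp : ∀ S : Set X, IsCompact (closure (e '' S)) → IsCompact (closure S)) :
    Continuous e.symm := by
  refine continuous_iff_seqContinuous.2 fun u b hu => ?_
  set S := e.symm '' insert b (range u)
  have himage : e '' S = insert b (range u) := e.image_symm_image _
  have hS : IsCompact (closure S) := by
    apply hcomp
    rw [himage, hu.isCompact_insert_range.isClosed.closure_eq]
    exact hu.isCompact_insert_range
  refine Tendsto.of_comp_of_isCompact he e.injective hS
    (Eventually.of_forall fun n => subset_closure ⟨u n, .inr ⟨n, rfl⟩, rfl⟩) ?_
  simpa [Function.comp_def] using hu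

/-- Two metrics with d' ≤ d, such that every d'-relatively compact set is
d-relatively compact, induce the same topology. -/
theorem stmt12 {M : Type*} (m m' : MetricSpace M)
    (hle : ∀ x y : M, m'.toPseudoMetricSpace.toDist.dist x y ≤
      m.toPseudoMetricSpace.toDist.dist x y)
    (hcomp : ∀ S : Set M,
      @IsCompact M m'.toUniformSpace.toTopologicalSpace
        (@closure M m'.toUniformSpace.toTopologicalSpace S) →
      @IsCompact M m.toUniformSpace.toTopologicalSpace
        (@closure M m.toUniformSpace.toTopologicalSpace S)) :
    m.toUniformSpace.toTopologicalSpace = m'.toUniformSpace.toTopologicalSpace := by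
  have hid : @Continuous M M m.toUniformSpace.toTopologicalSpace
      m'.toUniformSpace.toTopologicalSpace id :=
    @LipschitzWith.continuous M M m.toPseudoEMetricSpace m'.toPseudoEMetricSpace 1 id
      (@LipschitzWith.mk_one M M m.toPseudoMetricSpace m'.toPseudoMetricSpace id hle)
  have hsymm := @Equiv.continuous_symm_of_isCompact_closure M M
    m.toUniformSpace.toTopologicalSpace m'.toUniformSpace.toTopologicalSpace _ _
    (Equiv.refl M) hid (fun S hS => hcomp S (by simpa using hS))
  exact le_antisymm (continuous_id_iff_le.1 hid) (continuous_id_iff_le.1 hsymm)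
end

section
/- The convex order on probability measures on ℝ^d with finite first moment is antisymmetric: if μ ≤_cx ν and ν ≤_cx μ, then μ = ν. -/
open MeasureTheory Metric Set Filter
open scoped Topology

/-!
Equality of the integrals of all integrable convex functions passes to differences of such
functions. For a nonempty closed convex set `K` the distance `d_K` is convex and Lipschitz, so
`(1 - n d_K)⁺ = (n d_K - 1)⁺ - (n d_K - 1)` is such a difference; these functions decrease to
the indicator of `K`, and dominated convergence gives `μ K = ν K`. Closed convex sets form a
π-system generating the Borel σ-algebra, since open balls are countable unions of closed balls.
-/

section Convex

variable {E : Type*} [NormedAddCommGroup E] [NormedSpace ℝ E]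

theorem convexOn_univ_infDist {K : Set E} (hK : Convex ℝ K) :
    ConvexOn ℝ univ (infDist · K) := by
  rcases K.eq_empty_or_nonempty with rfl | hne
  · simpa only [infDist_empty] using convexOn_const 0 convex_univ
  refine ⟨convex_univ, fun x _ y _ a b ha hb hab => le_of_forall_pos_le_add fun ε hε => ?_⟩
  obtain ⟨p, hpK, hp⟩ := (infDist_lt_iff hne).1 (lt_add_of_pos_right (infDist x K) hε)
  obtain ⟨q, hqK, hq⟩ := (infDist_lt_iff hne).1 (lt_add_of_pos_right (infDist y K) hε)
  calc infDist (a • x + b • y) K ≤ dist (a • x + b • y) (a • p + b • q) :=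
        infDist_le_dist_of_mem (hK hpK hqK ha hb hab)
    _ ≤ dist (a • x) (a • p) + dist (b • y) (b • q) := dist_add_add_le _ _ _ _
    _ = a * dist x p + b * dist y q := by
        rw [dist_smul₀, dist_smul₀, Real.norm_of_nonneg ha, Real.norm_of_nonneg hb]
    _ ≤ a * (infDist x K + ε) + b * (infDist y K + ε) := by gcongr
    _ = a • infDist x K + b • infDist y K + ε := by
        simp only [smul_eq_mul]; linear_combination ε * hab

end Convex

theorem LipschitzWith.integrable_of_integrable_norm {E : Type*} [SeminormedAddCommGroup E]
    [MeasurableSpace E] [OpensMeasurableSpace E] {μ : Measure E} [IsFiniteMeasure μ]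
    {C : NNReal} {f : E → ℝ} (hf : LipschitzWith C f) (hμ : Integrable (‖·‖) μ) :
    Integrable f μ := by
  refine ((integrable_const ‖f 0‖).add (hμ.const_mul C)).mono'
    hf.continuous.aestronglyMeasurable (ae_of_all _ fun x => ?_)
  calc ‖f x‖ ≤ ‖f 0‖ + ‖f x - f 0‖ := norm_le_norm_add_norm_sub' _ _
    _ ≤ ‖f 0‖ + C * ‖x‖ := by
        simpa [dist_eq_norm] using hf.dist_le_mul x 0

section ConvexOrder

variable {E : Type*} [AddCommMonoid E] [Module ℝ E] [MeasurableSpace E] {μ ν : Measure E}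

theorem integral_max_neg_zero_eq_of_convexOn
    (h : ∀ f : E → ℝ, ConvexOn ℝ univ f → Integrable f μ → Integrable f ν →
      ∫ x, f x ∂μ = ∫ x, f x ∂ν)
    {f : E → ℝ} (hf : ConvexOn ℝ univ f) (hfμ : Integrable f μ) (hfν : Integrable f ν) :
    ∫ x, max (-f x) 0 ∂μ = ∫ x, max (-f x) 0 ∂ν := by
  have hpos : ConvexOn ℝ univ fun x => max (f x) 0 := hf.sup (convexOn_const 0 convex_univ)
  have hsplit : ∀ m : Measure E, Integrable f m →
      ∫ x, max (-f x) 0 ∂m = ∫ x, max (f x) 0 ∂m - ∫ x, f x ∂m := fun m hfm => by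
    rw [← integral_sub hfm.pos_part hfm]
    congr 1 with x
    rw [← max_sub_sub_right, sub_self, zero_sub, max_comm]
  rw [hsplit μ hfμ, hsplit ν hfν, h _ hpos hfμ.pos_part hfν.pos_part, h f hf hfμ hfν]

end ConvexOrder

section Approximation

variable {X : Type*} [PseudoMetricSpace X] {K : Set X}

theorem tendsto_max_one_sub_mul_infDist (hK : IsClosed K) (hne : K.Nonempty) (x : X) :
    Tendsto (fun n : ℕ => max (1 - n * infDist x K) 0) atTop (𝓝 (K.indicator 1 x)) := by
  by_cases hx : x ∈ K
  · simp [infDist_zero_of_mem hx, hx]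
  · have hpos : 0 < infDist x K := (hK.notMem_iff_infDist_pos hne).1 hx
    rw [indicator_of_notMem hx]
    refine tendsto_const_nhds.congr' ?_
    filter_upwards [(tendsto_natCast_atTop_atTop.atTop_mul_const hpos).eventually_ge_atTop 1]
      with n hn
    exact (max_eq_right (by linarith)).symm

theorem tendsto_integral_max_one_sub_mul_infDist [MeasurableSpace X] [OpensMeasurableSpace X]
    (μ : Measure X) [IsFiniteMeasure μ] (hK : IsClosed K) (hne : K.Nonempty) :
    Tendsto (fun n : ℕ => ∫ x, max (1 - n * infDist x K) 0 ∂μ) atTop (𝓝 (μ.real K)) := by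
  rw [← integral_indicator_one hK.measurableSet]
  refine tendsto_integral_of_dominated_convergence (fun _ => 1) (fun n => ?_) (integrable_const 1)
    (fun n => ae_of_all _ fun x => ?_) (ae_of_all _ (tendsto_max_one_sub_mul_infDist hK hne))
  · exact ((continuous_const.sub (continuous_const.mul (continuous_infDist_pt K))).max
      continuous_const).aestronglyMeasurable
  · have : 0 ≤ (n : ℝ) * infDist x K := mul_nonneg n.cast_nonneg infDist_nonneg
    rw [Real.norm_of_nonneg (le_max_right _ _)]
    exact max_le (by linarith) zero_le_one

end Approximation

section Determination

variable {E : Type*} [NormedAddCommGroup E] [NormedSpace ℝ E]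

theorem borel_eq_generateFrom_isClosed_convex [SecondCountableTopology E] :
    borel E = .generateFrom {s | IsClosed s ∧ Convex ℝ s} := by
  refine le_antisymm ?_ (borel_eq_generateFrom_isClosed (α := E) ▸
    MeasurableSpace.generateFrom_mono fun s hs => hs.1)
  have hbasis : TopologicalSpace.IsTopologicalBasis (range fun p : E × ℝ => ball p.1 p.2) :=
    TopologicalSpace.isTopologicalBasis_of_isOpen_of_nhds
      (by rintro _ ⟨p, rfl⟩; exact isOpen_ball) fun x U hx hU => by
        obtain ⟨r, hr, hrU⟩ := Metric.isOpen_iff.1 hU x hx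
        exact ⟨_, ⟨(x, r), rfl⟩, mem_ball_self hr, hrU⟩
  rw [hbasis.borel_eq_generateFrom]
  refine MeasurableSpace.generateFrom_le ?_
  rintro _ ⟨⟨c, r⟩, rfl⟩
  -- The sublevel sets of `dist · c` are closed balls, so it is measurable for the new σ-algebra.
  have hdist : Measurable[.generateFrom {s | IsClosed s ∧ Convex ℝ s}] (dist · c) :=
    measurable_of_Iic fun t => .basic _ ⟨isClosed_closedBall, convex_closedBall c t⟩
  exact hdist measurableSet_Iio

variable [MeasurableSpace E] [BorelSpace E]

theorem measure_eq_of_integral_convexOn_eq {μ ν : Measure E} [IsFiniteMeasure μ]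
    [IsFiniteMeasure ν] (hμ : Integrable (‖·‖) μ) (hν : Integrable (‖·‖) ν)
    (h : ∀ f : E → ℝ, ConvexOn ℝ univ f → Integrable f μ → Integrable f ν →
      ∫ x, f x ∂μ = ∫ x, f x ∂ν)
    {K : Set E} (hK : IsClosed K) (hKc : Convex ℝ K) (hne : K.Nonempty) : μ K = ν K := by
  have hconv (n : ℕ) : ConvexOn ℝ univ fun x => n * infDist x K - 1 :=
    ((convexOn_univ_infDist hKc).smul n.cast_nonneg).sub (concaveOn_const 1 convex_univ)
  have hint (n : ℕ) (m : Measure E) [IsFiniteMeasure m] (hm : Integrable (‖·‖) m) :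
      Integrable (fun x => n * infDist x K - 1) m :=
    (((lipschitz_infDist_pt K).integrable_of_integrable_norm hm).const_mul n).sub
      (integrable_const 1)
  have heq (n : ℕ) : ∫ x, max (1 - n * infDist x K) 0 ∂μ =
      ∫ x, max (1 - n * infDist x K) 0 ∂ν := by
    simpa only [neg_sub] using
      integral_max_neg_zero_eq_of_convexOn h (hconv n) (hint n μ hμ) (hint n ν hν)
  rw [← measureReal_eq_measureReal_iff]
  exact tendsto_nhds_unique ((tendsto_integral_max_one_sub_mul_infDist μ hK hne).congr heq)
    (tendsto_integral_max_one_sub_mul_infDist ν hK hne)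

theorem MeasureTheory.Measure.ext_of_isClosed_convex [SecondCountableTopology E] {μ ν : Measure E}
    [IsFiniteMeasure μ]
    (h : ∀ K : Set E, IsClosed K → Convex ℝ K → K.Nonempty → μ K = ν K) : μ = ν := by
  refine ext_of_generate_finite _ ((BorelSpace.measurable_eq).trans
      borel_eq_generateFrom_isClosed_convex)
    (fun s hs t ht _ => ⟨hs.1.inter ht.1, hs.2.inter ht.2⟩) (fun K ⟨hK, hKc⟩ => ?_)
    (h univ isClosed_univ convex_univ univ_nonempty)
  rcases K.eq_empty_or_nonempty with rfl | hne
  · simp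
  · exact h K hK hKc hne

end Determination

/-- The convex order on probability measures on ℝ^d with finite first moment
is antisymmetric. -/
theorem stmt16 (d : ℕ)
    (μ ν : Measure (EuclideanSpace ℝ (Fin d)))
    [IsProbabilityMeasure μ] [IsProbabilityMeasure ν]
    (hμ : Integrable (fun x => ‖x‖) μ) (hν : Integrable (fun x => ‖x‖) ν)
    (h1 : ∀ f : EuclideanSpace ℝ (Fin d) → ℝ, ConvexOn ℝ Set.univ f →
      Integrable f μ → Integrable f ν → ∫ x, f x ∂μ ≤ ∫ x, f x ∂ν)
    (h2 : ∀ f : EuclideanSpace ℝ (Fin d) → ℝ, ConvexOn ℝ Set.univ f →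
      Integrable f μ → Integrable f ν → ∫ x, f x ∂ν ≤ ∫ x, f x ∂μ) :
    μ = ν :=
  Measure.ext_of_isClosed_convex fun _ hK hKc hne =>
    measure_eq_of_integral_convexOn_eq hμ hν
      (fun f hf hfμ hfν => (h1 f hf hfμ hfν).antisymm (h2 f hf hfμ hfν)) hK hKc hne
end
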